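/- arXiv:1601.01259 — 2 statements merged into one kernel-verified Lean document; each statement's English description precedes it below -/
import Mathlib

section
/- Let 𝒱 = span{E_{11}, E_{12}, E_{13}, E_{14}} ⊂ M_4(ℂ), where E_{ij} denotes the matrix unit. Then for every orthogonal projection P ∈ M_4(ℂ) of rank 2, dim(P𝒱P) ≤ 2. (In particular, Theorem 3.3 does not extend to arbitrary four-dimensional subspaces of M_n(ℂ).) -/
open Matrix

/-- The compression map `A ↦ P * A * P`. -/
noncomputable def compress {m : Type*} [Fintype m] (P : Matrix m m ℂ) :
    Matrix m m ℂ →ₗ[ℂ] Matrix m m ℂ where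
  toFun A := P * A * P
  map_add' A B := by simp [Matrix.mul_add, Matrix.add_mul]
  map_smul' c A := by simp [Matrix.mul_smul, Matrix.smul_mul]

/-- An operator system: a subspace of matrices containing the identity and
closed under conjugate transpose. -/
def IsOperatorSystem {m : Type*} [Fintype m] [DecidableEq m]
    (V : Submodule ℂ (Matrix m m ℂ)) : Prop :=
  (1 : Matrix m m ℂ) ∈ V ∧ ∀ A ∈ V, Aᴴ ∈ V

/-- The operator system `D_n` of diagonal matrices. -/
noncomputable def diagMatrices (n : ℕ) : Submodule ℂ (Matrix (Fin n) (Fin n) ℂ) where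
  carrier := {A | A.IsDiag}
  add_mem' := Matrix.IsDiag.add
  zero_mem' := Matrix.isDiag_zero
  smul_mem' c _ h := h.smul c

/-!
`P E_{ij} P = (P e_i)(e_jᵀ P)` is the rank-one matrix whose column factor `P e_i` does not
depend on `j`, while its row factor is the `j`-th row of `P`. So compression maps the row space
`span{E_{i1}, …, E_{in}}` linearly onto `{(P e_i) wᵀ : w ∈ rowspace P}`, whose dimension is at
most `rank P`.
-/

section

variable {m : Type*} [Fintype m] [DecidableEq m]

theorem compress_single_one (P : Matrix m m ℂ) (i j : m) :
    compress P (single i j 1) = vecMulVec (Pᵀ i) (P j) := by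
  change P * single i j 1 * P = _
  rw [single_eq_single_vecMulVec_single, mul_vecMulVec, vecMulVec_mul, mulVec_single_one,
    single_one_vecMul]
  rfl

theorem map_compress_span_single_row (P : Matrix m m ℂ) (i : m) :
    (Submodule.span ℂ (Set.range fun j => single i j (1 : ℂ))).map (compress P) =
      (Submodule.span ℂ (Set.range P.row)).map (vecMulVecBilin ℂ ℂ (Pᵀ i)) := by
  rw [Submodule.map_span, Submodule.map_span, ← Set.range_comp, ← Set.range_comp]
  exact congrArg (Submodule.span ℂ ∘ Set.range) (funext (compress_single_one P i))

theorem finrank_map_compress_span_single_row_le (P : Matrix m m ℂ) (i : m) :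
    Module.finrank ℂ ((Submodule.span ℂ (Set.range fun j => single i j (1 : ℂ))).map
      (compress P)) ≤ P.rank := by
  rw [map_compress_span_single_row, rank_eq_finrank_span_row]
  exact Submodule.finrank_map_le _ _

end

theorem four_dim_subspace_no_two_clique_general (P : Matrix (Fin 4) (Fin 4) ℂ)
    (hrank : P.rank = 2) :
    Module.finrank ℂ ((Submodule.span ℂ
      (Set.range fun j : Fin 4 => Matrix.single (0 : Fin 4) j (1 : ℂ))).map
      (compress P)) ≤ 2 :=
  hrank ▸ finrank_map_compress_span_single_row_le P 0

/-- For `𝒱 = span{E₁₁, E₁₂, E₁₃, E₁₄} ⊂ M₄` and any rank-2 projection `P`,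
`dim(P𝒱P) ≤ 2`. -/
theorem four_dim_subspace_no_two_clique (P : Matrix (Fin 4) (Fin 4) ℂ)
    (hP : P * P = P) (hP' : Pᴴ = P) (hrank : P.rank = 2) :
    Module.finrank ℂ ((Submodule.span ℂ
      (Set.range fun j : Fin 4 => Matrix.single (0 : Fin 4) j (1 : ℂ))).map
      (compress P)) ≤ 2 :=
  four_dim_subspace_no_two_clique_general P hrank
end

section
/- Let n = k⁴ + k³ + k − 1 and let 𝒱 ⊆ M_n(ℂ) be an operator system. Suppose 𝒱 contains matrices A_1, …, A_{k⁴+k³} such that for each i one has ⟨A_i e_i, e_{i+1}⟩ ≠ 0, and ⟨A_i e_r, e_s⟩ = 0 whenever max{r,s} > i+1 and r ≠ s. Then 𝒱 has a quantum k-clique. -/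
/-!
Only the matrices `B_p := A_{2m}`, where `m` is the position of `p = (a, b)` in `[k]²`, are
used, and only on the first `2k²` coordinates: coordinate `2m + 1` gets the label `a` and
coordinate `2m` the label `b`, so each label occurs `2k` times. For unimodular phases `w` the
vectors `u_x = (2k)^{-1/2} ∑_{label j = x} w_j e_j` are orthonormal, so `P = ∑ u_x u_xᴴ` is a
rank-`k` projection and `P𝒱P ≅ {(⟨A u_y, u_x⟩)_{x,y} : A ∈ 𝒱}`; this is all of `M_k` once the
`k²` compressions of the `B_p` are linearly independent.

Take `w_j = z ^ π_j` with `|z| = 1` and weights `π` increasing along the odd and decreasing along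
the even coordinates. The staircase condition makes `(2m + 1, 2m)` the unique entry in the
support of `B_p` maximising `π_r - π_s`, so a power of `z` times the compression of `B_p` is a
polynomial in `z` whose constant term is `⟨B_p e_{2m}, e_{2m+1}⟩` times the matrix unit at `p`.
The determinant of the coefficient matrix is then a polynomial that is nonzero at `0`, hence not
identically zero on the unit circle.
-/

open Matrix

open Polynomial

section Isometry

variable {m ι : Type*} [Fintype m]

noncomputable def sandwich (U : Matrix m ι ℂ) : Matrix m m ℂ →ₗ[ℂ] Matrix ι ι ℂ where
  toFun X := Uᴴ * X * U
  map_add' X Y := by simp [Matrix.mul_add, Matrix.add_mul]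
  map_smul' c X := by simp [Matrix.mul_smul, Matrix.smul_mul]

@[simp]
lemma sandwich_apply (U : Matrix m ι ℂ) (X : Matrix m m ℂ) : sandwich U X = Uᴴ * X * U := rfl

variable [Fintype ι]

lemma compress_mul_conjTranspose (U : Matrix m ι ℂ) :
    compress (U * Uᴴ) = sandwich Uᴴ ∘ₗ sandwich U := by
  ext1 X
  simp [compress, Matrix.mul_assoc]

variable [DecidableEq ι] {U : Matrix m ι ℂ}

lemma sandwich_sandwich_conjTranspose (hU : Uᴴ * U = 1) (Y : Matrix ι ι ℂ) :
    sandwich U (sandwich Uᴴ Y) = Y := by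
  simp only [sandwich_apply, conjTranspose_conjTranspose, ← Matrix.mul_assoc, hU, Matrix.one_mul]
  rw [Matrix.mul_assoc, hU, Matrix.mul_one]

lemma finrank_map_compress_mul_conjTranspose (hU : Uᴴ * U = 1) (V : Submodule ℂ (Matrix m m ℂ)) :
    Module.finrank ℂ (V.map (compress (U * Uᴴ))) = Module.finrank ℂ (V.map (sandwich U)) := by
  rw [compress_mul_conjTranspose, Submodule.map_comp]
  exact (LinearEquiv.finrank_eq (Submodule.equivMapOfInjective _
    (Function.LeftInverse.injective (sandwich_sandwich_conjTranspose hU)) _)).symm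

lemma isIdempotentElem_mul_conjTranspose (hU : Uᴴ * U = 1) : IsIdempotentElem (U * Uᴴ) := by
  rw [IsIdempotentElem, Matrix.mul_assoc, ← Matrix.mul_assoc Uᴴ, hU, Matrix.one_mul]

lemma rank_mul_conjTranspose (hU : Uᴴ * U = 1) : (U * Uᴴ).rank = Fintype.card ι := by
  refine le_antisymm ((rank_mul_le_left _ _).trans U.rank_le_card_width) ?_
  calc Fintype.card ι = (Uᴴ * (U * Uᴴ) * U).rank := by
        rw [← Matrix.mul_assoc, hU, Matrix.one_mul, hU, rank_one]
    _ ≤ (U * Uᴴ).rank := (rank_mul_le_left _ _).trans (rank_mul_le_right _ _)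

end Isometry

lemma sandwich_smul_one_submatrix_mul {m γ κ : Type*} [Fintype m] [DecidableEq m] [Fintype γ]
    (r : ℂ) (ι : γ → m) (W : Matrix γ κ ℂ) (X : Matrix m m ℂ) :
    sandwich (r • ((1 : Matrix m m ℂ).submatrix id ι * W)) X =
      (star r * r) • sandwich W (X.submatrix ι ι) := by
  have hX : (1 : Matrix m m ℂ).submatrix ι id * X * (1 : Matrix m m ℂ).submatrix id ι =
      X.submatrix ι ι := by
    ext; simp [mul_apply, one_apply]
  simp only [sandwich_apply, conjTranspose_smul, conjTranspose_mul, conjTranspose_submatrix,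
    conjTranspose_one, Matrix.smul_mul, Matrix.mul_smul, smul_smul, ← hX, Matrix.mul_assoc,
    mul_comm r]

lemma exists_norm_eq_one_eval_ne_zero {p : ℂ[X]} (hp : p ≠ 0) :
    ∃ z : ℂ, ‖z‖ = 1 ∧ p.eval z ≠ 0 := by
  have hinf : ((fun t : ℝ => (Circle.exp t : ℂ)) '' Set.Icc 0 1).Infinite :=
    (Set.Icc_infinite zero_lt_one).image
      (Circle.coe_injective.comp_injOn (Circle.exp_injOn_Icc (by linarith [Real.pi_gt_three])))
  obtain ⟨_, ⟨t, -, rfl⟩, ht⟩ := hinf.exists_notMem_finite (p.finite_setOfPred_isRoot hp)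
  exact ⟨Circle.exp t, by simp, ht⟩

lemma exists_norm_eq_one_det_map_eval_ne_zero {ρ : Type*} [Fintype ρ] [DecidableEq ρ]
    (Q : Matrix ρ ρ ℂ[X]) (h0 : (Q.map (eval 0)).det ≠ 0) :
    ∃ z : ℂ, ‖z‖ = 1 ∧ (Q.map (eval z)).det ≠ 0 := by
  have hdet : ∀ z, (Q.map (eval z)).det = Q.det.eval z := fun z =>
    ((evalRingHom z).map_det Q).symm
  obtain ⟨z, hz, hQz⟩ := exists_norm_eq_one_eval_ne_zero (p := Q.det)
    (fun h => h0 (by rw [hdet, h, eval_zero]))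
  exact ⟨z, hz, by rwa [hdet]⟩

lemma conj_pow_mul_pow_of_norm_eq_one {z : ℂ} (hz : ‖z‖ = 1) (a : ℕ) :
    (starRingEnd ℂ) z ^ a * z ^ a = 1 := by
  rw [← mul_pow, Complex.conj_mul', hz]
  simp

lemma pow_mul_conj_pow_of_norm_eq_one {z : ℂ} (hz : ‖z‖ = 1) {a b : ℕ} (hab : a ≤ b) :
    z ^ b * (starRingEnd ℂ) z ^ a = z ^ (b - a) := by
  rw [← Nat.sub_add_cancel hab, pow_add, Nat.add_sub_cancel, mul_assoc, mul_comm (z ^ a),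
    conj_pow_mul_pow_of_norm_eq_one hz, mul_one]

lemma star_ofReal_inv_sqrt_mul_self {x : ℝ} (hx : 0 < x) :
    star ((Real.sqrt x : ℂ)⁻¹) * (Real.sqrt x : ℂ)⁻¹ = (x : ℂ)⁻¹ := by
  rw [Complex.star_def, map_inv₀, Complex.conj_ofReal, ← mul_inv, ← Complex.ofReal_mul,
    Real.mul_self_sqrt hx.le]

section Phase

variable {γ κ : Type*} [Fintype γ] [DecidableEq κ]

noncomputable def phaseMatrix (lab : γ → κ) (π : γ → ℕ) (z : ℂ) : Matrix γ κ ℂ :=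
  of fun c x => if lab c = x then z ^ π c else 0

lemma conjTranspose_phaseMatrix_mul_self (lab : γ → κ) (π : γ → ℕ) {z : ℂ} (hz : ‖z‖ = 1) :
    (phaseMatrix lab π z)ᴴ * phaseMatrix lab π z =
      diagonal fun x => ((Finset.univ.filter fun c => lab c = x).card : ℂ) := by
  ext x y
  simp only [mul_apply, conjTranspose_apply, phaseMatrix, of_apply, diagonal_apply]
  split_ifs with hxy
  · subst hxy
    rw [Finset.card_filter, Nat.cast_sum]
    refine Finset.sum_congr rfl fun c _ => ?_
    split_ifs <;> simp [conj_pow_mul_pow_of_norm_eq_one hz]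
  · refine Finset.sum_eq_zero fun c _ => ?_
    split_ifs <;> simp_all

lemma conjTranspose_mul_self_smul_one_submatrix_mul_phaseMatrix {m : Type*} [Fintype m]
    [DecidableEq m] [DecidableEq γ] {ι : γ → m} (hι : Function.Injective ι) (lab : γ → κ)
    (π : γ → ℕ) {z : ℂ} (hz : ‖z‖ = 1) {r : ℂ}
    (hr : ∀ x, star r * r * ((Finset.univ.filter fun c => lab c = x).card : ℂ) = 1) :
    (r • ((1 : Matrix m m ℂ).submatrix id ι * phaseMatrix lab π z))ᴴ *
      (r • ((1 : Matrix m m ℂ).submatrix id ι * phaseMatrix lab π z)) = 1 := by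
  rw [← Matrix.mul_one (_ᴴ), ← sandwich_apply, sandwich_smul_one_submatrix_mul,
    submatrix_one _ hι, sandwich_apply, Matrix.mul_one, conjTranspose_phaseMatrix_mul_self _ _ hz]
  ext x y
  by_cases hxy : x = y
  · subst hxy; simpa using hr x
  · simp [hxy]

lemma sandwich_phaseMatrix_apply (lab : γ → κ) (π : γ → ℕ) (z : ℂ) (Y : Matrix γ γ ℂ)
    (x y : κ) :
    sandwich (phaseMatrix lab π z) Y x y = ∑ e : γ × γ,
      if lab e.1 = x ∧ lab e.2 = y then
        (starRingEnd ℂ) z ^ π e.1 * Y e.1 e.2 * z ^ π e.2 else 0 := by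
  simp only [sandwich_apply, mul_apply, conjTranspose_apply, phaseMatrix, of_apply,
    Finset.sum_mul, Fintype.sum_prod_type]
  rw [Finset.sum_comm]
  refine Finset.sum_congr rfl fun c _ => Finset.sum_congr rfl fun c' _ => ?_
  split_ifs <;> simp_all

noncomputable def phasePoly (lab : γ → κ) (π : γ → ℕ) (h : κ × κ → ℕ)
    (Y : κ × κ → Matrix γ γ ℂ) : Matrix (κ × κ) (κ × κ) ℂ[X] :=
  of fun p q => ∑ e : γ × γ,
    if lab e.1 = q.1 ∧ lab e.2 = q.2 then C (Y p e.1 e.2) * X ^ (π e.2 + h p - π e.1) else 0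

variable {lab : γ → κ} {π : γ → ℕ} {h : κ × κ → ℕ} {Y : κ × κ → Matrix γ γ ℂ}
  {s : κ × κ → γ × γ}

lemma phasePoly_map_eval_zero (hs : ∀ p, lab (s p).1 = p.1 ∧ lab (s p).2 = p.2)
    (hπs : ∀ p, π (s p).1 = π (s p).2 + h p)
    (hπ : ∀ p c c', Y p c c' ≠ 0 → (c, c') ≠ s p → π c < π c' + h p) :
    (phasePoly lab π h Y).map (eval 0) = diagonal fun p => Y p (s p).1 (s p).2 := by
  ext p q
  simp only [phasePoly, map_apply, of_apply, eval_finsetSum, diagonal_apply]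
  rw [Finset.sum_eq_single (s p)]
  · have hq : (lab (s p).1 = q.1 ∧ lab (s p).2 = q.2) ↔ p = q := by
      rw [(hs p).1, (hs p).2, ← Prod.ext_iff]
    simp only [hπs p, Nat.sub_self, hq]
    split_ifs <;> simp
  · intro e _ he
    split_ifs
    · by_cases hY : Y p e.1 e.2 = 0
      · simp [hY]
      · simp [zero_pow (Nat.sub_ne_zero_of_lt (hπ p e.1 e.2 hY he))]
    · simp
  · simp

variable [Fintype κ]

lemma phasePoly_map_eval {z : ℂ} (hz : ‖z‖ = 1) (hπs : ∀ p, π (s p).1 = π (s p).2 + h p)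
    (hπ : ∀ p c c', Y p c c' ≠ 0 → (c, c') ≠ s p → π c < π c' + h p) :
    (phasePoly lab π h Y).map (eval z) = diagonal (fun p => z ^ h p) *
      of fun p q : κ × κ => sandwich (phaseMatrix lab π z) (Y p) q.1 q.2 := by
  ext p q
  simp only [phasePoly, map_apply, of_apply, eval_finsetSum, diagonal_mul,
    sandwich_phaseMatrix_apply, Finset.mul_sum]
  refine Finset.sum_congr rfl fun e _ => ?_
  split_ifs
  · by_cases hY : Y p e.1 e.2 = 0
    · simp [hY]
    · have hle : π e.1 ≤ π e.2 + h p := by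
        by_cases he : e = s p
        · rw [he, hπs]
        · exact (hπ p e.1 e.2 hY he).le
      rw [eval_mul, eval_C, eval_pow, eval_X, ← pow_mul_conj_pow_of_norm_eq_one hz hle, pow_add]
      ring
  · simp

theorem exists_linearIndependent_sandwich_phaseMatrix
    (hs : ∀ p, lab (s p).1 = p.1 ∧ lab (s p).2 = p.2) (hY : ∀ p, Y p (s p).1 (s p).2 ≠ 0)
    (hπs : ∀ p, π (s p).1 = π (s p).2 + h p)
    (hπ : ∀ p c c', Y p c c' ≠ 0 → (c, c') ≠ s p → π c < π c' + h p) :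
    ∃ z : ℂ, ‖z‖ = 1 ∧ LinearIndependent ℂ fun p => sandwich (phaseMatrix lab π z) (Y p) := by
  obtain ⟨z, hz, hdet⟩ := exists_norm_eq_one_det_map_eval_ne_zero (phasePoly lab π h Y) (by
    rw [phasePoly_map_eval_zero hs hπs hπ, det_diagonal]
    exact Finset.prod_ne_zero_iff.mpr fun p _ => hY p)
  rw [phasePoly_map_eval hz hπs hπ, det_mul] at hdet
  have hrows := linearIndependent_rows_iff_isUnit.mpr
    ((isUnit_iff_isUnit_det _).mpr (isUnit_iff_ne_zero.mpr (right_ne_zero_of_mul hdet)))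
  exact ⟨z, hz, hrows.map' (LinearEquiv.curry ℂ ℂ κ κ).toLinearMap (LinearEquiv.ker _)⟩

end Phase

namespace Staircase

variable {k : ℕ}

def slot : (Fin k × Fin k) × Fin 2 ≃ Fin (k * k * 2) :=
  (Equiv.prodCongr finProdFinEquiv (Equiv.refl _)).trans finProdFinEquiv

lemma slot_val (c : (Fin k × Fin k) × Fin 2) :
    (slot c : ℕ) = c.2 + 2 * (finProdFinEquiv c.1 : ℕ) := by
  simp [slot, finProdFinEquiv_apply_val]

def label (c : (Fin k × Fin k) × Fin 2) : Fin k := if c.2 = 1 then c.1.1 else c.1.2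

lemma card_filter_label_eq (x : Fin k) :
    (Finset.univ.filter fun c : (Fin k × Fin k) × Fin 2 => label c = x).card = 2 * k := by
  rw [Finset.card_filter, Fintype.sum_prod_type]
  simp only [Fin.sum_univ_two, label, Fin.zero_eq_one_iff, if_true]
  rw [Finset.sum_add_distrib, Fintype.sum_prod_type, Fintype.sum_prod_type]
  simp [two_mul, apply_ite Finset.card]

/-- Odd positions weigh more the later they come, even ones less, so that among positions
`≤ 2m + 1` the difference `weight s - weight s'` is maximal exactly at `(2m + 1, 2m)`. -/
def weight (N s : ℕ) : ℕ := if s % 2 = 1 then N + s else N - s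

lemma weight_lt_add {N m s s' : ℕ} (hm : 2 * m ≤ N) (hs : s ≤ 2 * m + 1) (hs' : s' ≤ 2 * m + 1)
    (hne : ¬(s = 2 * m + 1 ∧ s' = 2 * m)) : weight N s < weight N s' + (4 * m + 1) := by
  unfold weight; split_ifs <;> omega

lemma weight_two_mul_add_one {N m : ℕ} (hm : 2 * m ≤ N) :
    weight N (2 * m + 1) = weight N (2 * m) + (4 * m + 1) := by
  unfold weight; split_ifs <;> omega

lemma weight_slot_one (p : Fin k × Fin k) :
    weight (k * k * 2) (slot (p, 1)) =
      weight (k * k * 2) (slot (p, 0)) + (4 * (finProdFinEquiv p : ℕ) + 1) := by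
  have := (finProdFinEquiv p).isLt
  rw [slot_val, slot_val, Fin.val_one, Fin.val_zero, zero_add, add_comm 1]
  exact weight_two_mul_add_one (by omega)

lemma weight_slot_lt {p : Fin k × Fin k} {c c' : (Fin k × Fin k) × Fin 2}
    (hc : (slot c : ℕ) ≤ 2 * (finProdFinEquiv p : ℕ) + 1)
    (hc' : (slot c' : ℕ) ≤ 2 * (finProdFinEquiv p : ℕ) + 1)
    (hne : (c, c') ≠ ((p, 1), (p, 0))) :
    weight (k * k * 2) (slot c) <
      weight (k * k * 2) (slot c') + (4 * (finProdFinEquiv p : ℕ) + 1) := by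
  have := (finProdFinEquiv p).isLt
  refine weight_lt_add (by omega) hc hc' fun ⟨h1, h0⟩ => hne ?_
  have e1 : slot c = slot (p, 1) := Fin.ext (by rw [h1, slot_val]; simp; omega)
  have e0 : slot c' = slot (p, 0) := Fin.ext (by rw [h0, slot_val]; simp)
  rw [slot.injective e1, slot.injective e0]

variable {n : ℕ}

def coord (hkn : k * k * 2 ≤ n) (c : (Fin k × Fin k) × Fin 2) : Fin n :=
  Fin.castLE hkn (slot c)

lemma weight_slot_lt_of_ne_zero (hkn : k * k * 2 ≤ n) {B : Matrix (Fin n) (Fin n) ℂ}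
    {p : Fin k × Fin k}
    (hzero : ∀ r s : Fin n, 2 * (finProdFinEquiv p : ℕ) + 1 < max (r : ℕ) (s : ℕ) →
      (r : ℕ) ≠ (s : ℕ) → B r s = 0)
    {c c' : (Fin k × Fin k) × Fin 2} (hB : B (coord hkn c) (coord hkn c') ≠ 0)
    (hne : (c, c') ≠ ((p, 1), (p, 0))) :
    weight (k * k * 2) (slot c) <
      weight (k * k * 2) (slot c') + (4 * (finProdFinEquiv p : ℕ) + 1) := by
  by_cases hcc : c = c'
  · subst hcc; omega
  have hmax : ¬2 * (finProdFinEquiv p : ℕ) + 1 < max (coord hkn c : ℕ) (coord hkn c') :=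
    fun h => hB (hzero _ _ h fun h' => hcc (slot.injective (Fin.ext h')))
  simp only [coord, Fin.val_castLE, not_lt, max_le_iff] at hmax
  exact weight_slot_lt hmax.1 hmax.2 hne

theorem exists_isometry_linearIndependent_sandwich (hkn : k * k * 2 ≤ n)
    (B : Fin k × Fin k → Matrix (Fin n) (Fin n) ℂ)
    (hoff : ∀ p, ∃ r s : Fin n, (r : ℕ) = 2 * (finProdFinEquiv p : ℕ) ∧
      (s : ℕ) = 2 * (finProdFinEquiv p : ℕ) + 1 ∧ B p s r ≠ 0)
    (hzero : ∀ p (r s : Fin n), 2 * (finProdFinEquiv p : ℕ) + 1 < max (r : ℕ) (s : ℕ) →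
      (r : ℕ) ≠ (s : ℕ) → B p r s = 0) :
    ∃ U : Matrix (Fin n) (Fin k) ℂ, Uᴴ * U = 1 ∧
      LinearIndependent ℂ fun p => sandwich U (B p) := by
  have hinj : Function.Injective (coord hkn) := (Fin.castLE_injective hkn).comp slot.injective
  have hY : ∀ p, B p (coord hkn (p, 1)) (coord hkn (p, 0)) ≠ 0 := by
    intro p
    obtain ⟨r, s, hr, hs, hB⟩ := hoff p
    convert hB using 2 <;> ext <;> simp [coord, slot_val, hr, hs, add_comm]
  obtain ⟨z, hz, hli⟩ := exists_linearIndependent_sandwich_phaseMatrix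
    (Y := fun p => (B p).submatrix (coord hkn) (coord hkn)) (lab := label)
    (π := fun c => weight (k * k * 2) (slot c)) (s := fun p => ((p, 1), (p, 0)))
    (fun p => by simp [label]) hY weight_slot_one
    fun p _ _ hB => weight_slot_lt_of_ne_zero hkn (hzero p) hB
  set r : ℂ := ((Real.sqrt (2 * k) : ℝ) : ℂ)⁻¹
  have hr : ∀ x : Fin k,
      star r * r * ((Finset.univ.filter fun c => label c = x).card : ℂ) = 1 := by
    intro x
    have hk : (0 : ℝ) < 2 * k := by have := x.pos; positivity
    rw [card_filter_label_eq, star_ofReal_inv_sqrt_mul_self hk]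
    exact_mod_cast inv_mul_cancel₀ hk.ne'
  refine ⟨r • ((1 : Matrix (Fin n) (Fin n) ℂ).submatrix id (coord hkn) *
      phaseMatrix label (fun c => weight (k * k * 2) (slot c)) z),
    conjTranspose_mul_self_smul_one_submatrix_mul_phaseMatrix hinj _ _ hz hr, ?_⟩
  simp only [sandwich_smul_one_submatrix_mul]
  exact hli.units_smul fun p => Units.mk0 _ (left_ne_zero_of_mul_eq_one (hr p.1))

end Staircase

theorem blocks2_quantum_clique_general (k n : ℕ) (hn : n = k ^ 4 + k ^ 3 + k - 1)
    (V : Submodule ℂ (Matrix (Fin n) (Fin n) ℂ))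
    (A : Fin (k ^ 4 + k ^ 3) → Matrix (Fin n) (Fin n) ℂ)
    (hmem : ∀ i, A i ∈ V)
    (hoff : ∀ i : Fin (k ^ 4 + k ^ 3), ∃ r s : Fin n,
      (r : ℕ) = (i : ℕ) ∧ (s : ℕ) = (i : ℕ) + 1 ∧ A i s r ≠ 0)
    (hzero : ∀ (i : Fin (k ^ 4 + k ^ 3)) (r s : Fin n),
      (i : ℕ) + 1 < max (r : ℕ) (s : ℕ) → (r : ℕ) ≠ (s : ℕ) → A i r s = 0) :
    ∃ P : Matrix (Fin n) (Fin n) ℂ, P * P = P ∧ Pᴴ = P ∧ P.rank = k ∧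
      Module.finrank ℂ (V.map (compress P)) = k ^ 2 := by
  have hk : k * k * 2 ≤ k ^ 4 + k ^ 3 := by
    rcases Nat.eq_zero_or_pos k with rfl | hk
    · simp
    · nlinarith [Nat.pow_le_pow_right hk (show 2 ≤ 3 by norm_num),
        Nat.pow_le_pow_right hk (show 2 ≤ 4 by norm_num)]
  have hkn : k * k * 2 ≤ n := by
    rcases Nat.eq_zero_or_pos k with rfl | hk0
    · simp
    · omega
  let op (p : Fin k × Fin k) : Fin (k ^ 4 + k ^ 3) :=
    ⟨2 * finProdFinEquiv p, by have := (finProdFinEquiv p).isLt; omega⟩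
  obtain ⟨U, hU, hli⟩ := Staircase.exists_isometry_linearIndependent_sandwich hkn
    (fun p => A (op p)) (fun p => hoff (op p)) (fun p => hzero (op p))
  refine ⟨U * Uᴴ, isIdempotentElem_mul_conjTranspose hU, by simp [conjTranspose_mul],
    by rw [rank_mul_conjTranspose hU, Fintype.card_fin], ?_⟩
  have htop : V.map (sandwich U) = ⊤ := by
    refine top_unique ((hli.span_eq_top_of_card_eq_finrank' ?_).ge.trans ?_)
    · simp [Module.finrank_matrix]
    · exact Submodule.span_le.mpr (Set.range_subset_iff.mpr fun p => V.mem_map_of_mem (hmem _))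
  rw [finrank_map_compress_mul_conjTranspose hU, htop, finrank_top, Module.finrank_matrix]
  simp [sq]

/-- Lemma 4.4 of the paper: with `n = k⁴ + k³ + k - 1`, if an operator system
`𝒱` contains matrices `A₁, …, A_{k⁴+k³}` with `⟨Aᵢeᵢ, e_{i+1}⟩ ≠ 0` and
`⟨Aᵢeᵣ, eₛ⟩ = 0` whenever `max{r,s} > i + 1` and `r ≠ s`, then `𝒱` has a
quantum `k`-clique. -/
theorem blocks2_quantum_clique (k n : ℕ) (hn : n = k ^ 4 + k ^ 3 + k - 1)
    (V : Submodule ℂ (Matrix (Fin n) (Fin n) ℂ)) (hos : IsOperatorSystem V)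
    (A : Fin (k ^ 4 + k ^ 3) → Matrix (Fin n) (Fin n) ℂ)
    (hmem : ∀ i, A i ∈ V)
    (hoff : ∀ i : Fin (k ^ 4 + k ^ 3), ∃ r s : Fin n,
      (r : ℕ) = (i : ℕ) ∧ (s : ℕ) = (i : ℕ) + 1 ∧ A i s r ≠ 0)
    (hzero : ∀ (i : Fin (k ^ 4 + k ^ 3)) (r s : Fin n),
      (i : ℕ) + 1 < max (r : ℕ) (s : ℕ) → (r : ℕ) ≠ (s : ℕ) → A i r s = 0) :
    ∃ P : Matrix (Fin n) (Fin n) ℂ, P * P = P ∧ Pᴴ = P ∧ P.rank = k ∧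
      Module.finrank ℂ (V.map (compress P)) = k ^ 2 :=
  blocks2_quantum_clique_general k n hn V A hmem hoff hzero
end
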